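/- arXiv:2111.12240 — 4 statements merged into one kernel-verified Lean document; each statement's English description precedes it below -/
import Mathlib

section
/- Let G be a graph, S a subset of V(G), and v, w two distinct vertices not in S with vw an edge of G. Then v can perform a valid initial PSD force on w when the blue set is S ∪ {v} if and only if the edge vw is a bridge in the induced subgraph G − S. -/
open SimpleGraph Set

variable {V : Type*}

/-- The subgraph of `G` obtained by deleting the vertices of `B`
(kept as isolated vertices). -/
def delVerts (G : SimpleGraph V) (B : Set V) : SimpleGraph V where
  Adj a b := G.Adj a b ∧ a ∉ B ∧ b ∉ B
  symm := ⟨fun _ _ ⟨h, ha, hb⟩ => ⟨h.symm, hb, ha⟩⟩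
  loopless := ⟨fun a ⟨h, _, _⟩ => G.loopless.irrefl a h⟩

/-- `u` may PSD-force `w` when the set of blue vertices is `B`:  `u` is blue, `w` is a white
neighbor of `u`, and `w` is the unique white neighbor of `u` in the component of `G - B`
containing `w`. -/
def PSDForce (G : SimpleGraph V) (B : Set V) (u w : V) : Prop :=
  u ∈ B ∧ w ∉ B ∧ G.Adj u w ∧
    ∀ x, G.Adj u x → x ∉ B → (delVerts G B).Reachable x w → x = w

/-- One round of simultaneous PSD forcing starting from blue set `B`. -/
def psdStep (G : SimpleGraph V) (B : Set V) : Set V :=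
  B ∪ {w | ∃ u, PSDForce G B u w}

/-- `B` is a PSD forcing set of `G`. -/
def IsPSDForcingSet (G : SimpleGraph V) (B : Set V) : Prop :=
  ∃ t, (psdStep G)^[t] B = Set.univ

/-- The PSD propagation time `pt_+(G; B)` of the set `B` in `G`. -/
noncomputable def psdPropTime (G : SimpleGraph V) (B : Set V) : ℕ :=
  sInf {t | (psdStep G)^[t] B = Set.univ}

/-- The PSD zero forcing number `Z_+(G)`. -/
noncomputable def psdZ (G : SimpleGraph V) : ℕ :=
  sInf {k | ∃ B : Set V, IsPSDForcingSet G B ∧ B.ncard = k}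

/-- The `k`-PSD propagation time `pt_+(G, k)`: the minimum of `pt_+(G; B)` over
PSD forcing sets `B` of size `k`. -/
noncomputable def psdPt (G : SimpleGraph V) (k : ℕ) : ℕ :=
  sInf {t | ∃ B : Set V, IsPSDForcingSet G B ∧ B.ncard = k ∧ psdPropTime G B = t}

/-- The PSD propagation time `pt_+(G) = pt_+(G, Z_+(G))`. -/
noncomputable def psdPtG (G : SimpleGraph V) : ℕ := psdPt G (psdZ G)

/-- The PSD propagation time of `B` within the induced subgraph `G[U]` (for `B ⊆ U`),
realized by making the vertices outside `U` isolated and initially blue. -/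
noncomputable def psdPropTimeOn (G : SimpleGraph V) (U B : Set V) : ℕ :=
  psdPropTime (delVerts G Uᶜ) (B ∪ Uᶜ)

/-- The vertex set of the component of `G - B` containing the white vertex `w`. -/
def compOf (G : SimpleGraph V) (B : Set V) (w : V) : Set V :=
  {x | x ∉ B ∧ (delVerts G B).Reachable x w}

/-!
With `S ∪ {v}` blue, `G - (S ∪ {v})` is `(G - S) - v`. A `v`–`w` path in `G - S` avoiding the
edge `vw` is an edge `vx` to another neighbour `x` followed by an `x`–`w` path avoiding `v`;
so such a path exists exactly when `v` has a second white neighbour in the component of `w`,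
which is what blocks the force `v → w`.
-/

@[simp]
lemma delVerts_adj {G : SimpleGraph V} {B : Set V} {a b : V} :
    (delVerts G B).Adj a b ↔ G.Adj a b ∧ a ∉ B ∧ b ∉ B :=
  Iff.rfl

lemma delVerts_union (G : SimpleGraph V) (S T : Set V) :
    delVerts G (S ∪ T) = delVerts (delVerts G S) T := by
  ext a b
  simp only [delVerts, mem_union, not_or]
  tauto

lemma delVerts_singleton_le_deleteEdges (G : SimpleGraph V) (u v : V) :
    delVerts G {u} ≤ G.deleteEdges {s(u, v)} := by
  rintro a b ⟨hab, ha, hb⟩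
  refine ⟨hab, fun he => ?_⟩
  rw [fromEdgeSet_adj, mem_singleton_iff, Sym2.eq_iff] at he
  rcases he.1 with ⟨rfl, -⟩ | ⟨-, rfl⟩
  exacts [ha rfl, hb rfl]

lemma SimpleGraph.Walk.reachable_delVerts {G : SimpleGraph V} {B : Set V} {a b : V}
    (p : G.Walk a b) (hp : ∀ x ∈ p.support, x ∉ B) : (delVerts G B).Reachable a b :=
  (p.transfer _ fun e he => by
    induction e with
    | h x y =>
      exact ⟨p.adj_of_mem_edges he, hp x (p.fst_mem_support_of_mem_edges he),
        hp y (p.snd_mem_support_of_mem_edges he)⟩).reachable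

theorem SimpleGraph.isBridge_iff_forall_adj_reachable_delVerts {H : SimpleGraph V} {u v : V}
    (huv : H.Adj u v) :
    H.IsBridge s(u, v) ↔ ∀ x, H.Adj u x → (delVerts H {u}).Reachable x v → x = v := by
  rw [isBridge_iff]
  constructor
  · intro hbridge x hux hxv
    by_contra hne
    have hux' : (H.deleteEdges {s(u, v)}).Adj u x :=
      ⟨hux, by simpa [Sym2.eq_iff, hux.ne, huv.ne] using hne⟩
    exact hbridge (hux'.reachable.trans (hxv.mono (delVerts_singleton_le_deleteEdges H u v)))
  · classical
    rintro hnbr ⟨p⟩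
    obtain ⟨q, hq⟩ := p.toPath
    cases q with
    | nil => exact huv.ne rfl
    | @cons _ x _ hux q =>
      rw [Walk.cons_isPath_iff] at hq
      have hxv : x ≠ v := fun h => hux.2 (by simp [h, huv.ne])
      refine hxv (hnbr x hux.1 ((q.mapLe (deleteEdges_le _)).reachable_delVerts ?_))
      rw [Walk.support_mapLe_eq_support]
      exact fun y hy hyu => hq.2 (mem_singleton_iff.mp hyu ▸ hy)

theorem stmt0_general (G : SimpleGraph V) (S : Set V) (v w : V)
    (hv : v ∉ S) (hw : w ∉ S) (hadj : G.Adj v w) :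
    PSDForce G (S ∪ {v}) v w ↔ (delVerts G S).IsBridge s(v, w) := by
  rw [isBridge_iff_forall_adj_reachable_delVerts (delVerts_adj.mpr ⟨hadj, hv, hw⟩),
    ← delVerts_union]
  simp only [PSDForce, delVerts_adj, mem_union, mem_singleton_iff, not_or, or_true, hv, hw,
    hadj, hadj.ne', not_false_eq_true, and_self, true_and, and_imp]
  exact forall_congr' fun x =>
    ⟨fun h hvx hxS => h hvx hxS hvx.ne', fun h hvx hxS _ => h hvx hxS⟩

/-- `v → w` is a valid initial PSD force for `S ∪ {v}` iff `vw` is a bridge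
in `G - S`. -/
theorem stmt0 (G : SimpleGraph V) (S : Set V) (v w : V)
    (hv : v ∉ S) (hw : w ∉ S) (hvw : v ≠ w) (hadj : G.Adj v w) :
    PSDForce G (S ∪ {v}) v w ↔ (delVerts G S).IsBridge s(v, w) :=
  stmt0_general G S v w hv hw hadj
end

section
/- Let G be a graph, S a subset of V(G), and v, w two distinct vertices not in S with vw an edge of G. Then v → w is a valid initial PSD force for S ∪ {v} if and only if w → v is a valid initial PSD force for S ∪ {w}. -/
open SimpleGraph Set

variable {V : Type*}

lemma notMem_of_mem_support_delVerts {G : SimpleGraph V} {A : Set V} {a b x : V}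
    (p : (delVerts G A).Walk a b) (ha : a ∉ A) (hx : x ∈ p.support) : x ∉ A := by
  induction p with
  | nil => simp_all
  | cons h q ih =>
    rcases List.mem_cons.mp (by simpa using hx) with rfl | hx
    · exact ha
    · exact ih h.2.2 hx

lemma reachable_delVerts_of_support {G : SimpleGraph V} {A B : Set V} {a b : V}
    (p : (delVerts G A).Walk a b) (h : ∀ x ∈ p.support, x ∉ B) :
    (delVerts G B).Reachable a b := by
  induction p with
  | nil => rfl
  | @cons u y _ hadj q ih =>
    have hadj' : (delVerts G B).Adj u y := ⟨hadj.1, h u (by simp), h y (by simp)⟩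
    exact hadj'.reachable.trans (ih fun x hx => h x (by simp [hx]))

/-- If some white neighbour `x ≠ v` of `w` reached `v` in `G - (S ∪ {w})`, the last vertex `y`
before `v` on a path from `x` to `v` would be a white neighbour of `v` other than `w`, reaching
`w` through `x` in `G - (S ∪ {v})`. -/
theorem PSDForce.swap {G : SimpleGraph V} {S : Set V} {v w : V} (hv : v ∉ S)
    (h : PSDForce G (S ∪ {v}) v w) : PSDForce G (S ∪ {w}) w v := by
  classical
  obtain ⟨-, hwB, hadj, H⟩ := h
  have hwv : w ≠ v := fun hwv => hwB (.inr hwv)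
  refine ⟨.inr rfl, by simp [hv, hwv.symm], hadj.symm, fun x hwx hxB hxv => ?_⟩
  by_contra hne
  obtain ⟨p, hp⟩ := hxv.some.reverse.toPath
  cases p with
  | nil => exact hne rfl
  | @cons _ y _ hvy q =>
    rw [Walk.cons_isPath_iff] at hp
    have hyB : y ∉ S ∪ {w} := hvy.2.2
    have hyv : y ≠ v := fun hyv => hp.2 (hyv ▸ q.start_mem_support)
    have hq : ∀ z ∈ q.support, z ∉ S ∪ {v} := by
      intro z hz
      have hzB := notMem_of_mem_support_delVerts q hyB hz
      have hzv : z ≠ v := fun hzv => hp.2 (hzv ▸ hz)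
      simp_all
    have hxw : (delVerts G (S ∪ {v})).Adj x w :=
      ⟨hwx.symm, by simp_all, hwB⟩
    have hyw := H y hvy.1 (by simp_all)
      ((reachable_delVerts_of_support q hq).trans hxw.reachable)
    exact hyB (.inr hyw)

theorem stmt1_general (G : SimpleGraph V) (S : Set V) (v w : V)
    (hv : v ∉ S) (hw : w ∉ S) :
    PSDForce G (S ∪ {v}) v w ↔ PSDForce G (S ∪ {w}) w v :=
  ⟨PSDForce.swap hv, PSDForce.swap hw⟩

/-- `v → w` is a valid initial PSD force for `S ∪ {v}` iff
`w → v` is a valid initial PSD force for `S ∪ {w}`. -/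
theorem stmt1 (G : SimpleGraph V) (S : Set V) (v w : V)
    (hv : v ∉ S) (hw : w ∉ S) (hvw : v ≠ w) (hadj : G.Adj v w) :
    PSDForce G (S ∪ {v}) v w ↔ PSDForce G (S ∪ {w}) w v :=
  stmt1_general G S v w hv hw
end

section
/- Let G be a graph of order n with a PSD forcing set B of size k such that the largest component of G − B has more than ⌈(n−k)/2⌉ vertices. Then there exists a PSD forcing set B' of size k such that the largest component of G − B' is strictly smaller than the largest component of G − B. -/
open SimpleGraph Set

variable {V : Type*}

/-- The number of vertices in a largest component of `G - B`. -/
noncomputable def maxCompSize (G : SimpleGraph V) (B : Set V) : ℕ :=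
  sSup ((fun w => (compOf G B w).ncard) '' Bᶜ)

/-! Let `C` be a largest component of `G - B` and look at the first round in which a vertex of
`C` gets forced, say `w` by `u`. Then `u ∈ B`, and since all of `C` is still white, `w` is the
only neighbour of `u` in `C`. Exchanging `u` for `w` gives a PSD forcing set
`B' = (B \ {u}) ∪ {w}` of the same size: inside `C` the process from `B'` is never behind the one
from `B`, because a white walk ending in `C` cannot leave `C` (`u` meets `C` only in the blue
vertex `w`), and once `C` is blue, `w` forces `u`. A component of `G - B'` lies either in
`C \ {w}` or in `{u} ∪ (V \ (B ∪ C))`, which has at most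
`n - k - |C| + 1 < |C|` vertices when `|C| > ⌈(n - k)/2⌉`. -/

section Exchange

variable {G : SimpleGraph V} {B S T : Set V} {u w w₀ x y : V}

lemma delVerts_anti (h : S ⊆ T) : delVerts G T ≤ delVerts G S :=
  fun _ _ ⟨hab, ha, hb⟩ => ⟨hab, fun h' => ha (h h'), fun h' => hb (h h')⟩

lemma psdStep_mono (h : S ⊆ T) : psdStep G S ⊆ psdStep G T := by
  rintro x (hx | ⟨v, hvS, -, hvx, huniq⟩)
  · exact Or.inl (h hx)
  · by_cases hxT : x ∈ T
    · exact Or.inl hxT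
    · exact Or.inr ⟨v, h hvS, hxT, hvx, fun y hvy hyT hyx =>
        huniq y hvy (fun hyS => hyT (h hyS)) (hyx.mono (delVerts_anti h))⟩

lemma psdStep_iterate_mono (h : S ⊆ T) (t : ℕ) : (psdStep G)^[t] S ⊆ (psdStep G)^[t] T := by
  induction t with
  | zero => exact h
  | succ t ih =>
    rw [Function.iterate_succ_apply', Function.iterate_succ_apply']
    exact psdStep_mono ih

lemma subset_psdStep_iterate (S : Set V) (t : ℕ) : S ⊆ (psdStep G)^[t] S := by
  induction t with
  | zero => exact subset_rfl
  | succ t ih =>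
    rw [Function.iterate_succ_apply']
    exact ih.trans subset_union_left

lemma IsPSDForcingSet.of_subset_psdStep_iterate (hS : IsPSDForcingSet G S) {t : ℕ}
    (h : S ⊆ (psdStep G)^[t] T) : IsPSDForcingSet G T := by
  obtain ⟨s, hs⟩ := hS
  refine ⟨s + t, univ_subset_iff.mp ?_⟩
  rw [Function.iterate_add_apply, ← hs]
  exact psdStep_iterate_mono h s

lemma SimpleGraph.Walk.support_subset_of_adj_imp {H : SimpleGraph V} {C : Set V}
    (hC : ∀ a b, H.Adj a b → b ∈ C → a ∈ C) (p : H.Walk y x) (hx : x ∈ C) :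
    ∀ z ∈ p.support, z ∈ C := by
  induction p with
  | nil => simpa using hx
  | cons hab q ih =>
    have hq := ih hx
    simp only [Walk.support_cons, List.mem_cons, forall_eq_or_imp]
    exact ⟨hC _ _ hab (hq _ q.start_mem_support), hq⟩

lemma SimpleGraph.Walk.reachable_delVerts_of_support_subset {C : Set V} (hST : S ∩ C ⊆ T)
    (p : (delVerts G T).Walk y x) (hp : ∀ z ∈ p.support, z ∈ C) :
    (delVerts G S).Reachable y x := by
  induction p with
  | nil => rfl
  | @cons a b _ hab q ih =>
    simp only [Walk.support_cons, List.mem_cons, forall_eq_or_imp] at hp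
    obtain ⟨hab, haT, hbT⟩ := hab
    have hb := hp.2 b q.start_mem_support
    have had : (delVerts G S).Adj a b :=
      ⟨hab, fun haS => haT (hST ⟨haS, hp.1⟩), fun hbS => hbT (hST ⟨hbS, hb⟩)⟩
    exact had.reachable.trans (ih hp.2)

lemma mem_compOf_of_adj (hyx : G.Adj y x) (hy : y ∉ B) (hx : x ∈ compOf G B w₀) :
    y ∈ compOf G B w₀ :=
  ⟨hy, (show (delVerts G B).Adj y x from ⟨hyx, hy, hx.1⟩).reachable.trans hx.2⟩

lemma reachable_delVerts_of_compOf_disjoint (hS : ∀ z ∈ compOf G B w₀, z ∉ S)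
    (hx : x ∈ compOf G B w₀) (hy : y ∈ compOf G B w₀) : (delVerts G S).Reachable y x := by
  obtain ⟨p⟩ := hy.2.trans hx.2.symm
  refine p.reachable_delVerts_of_support_subset (fun z hz => absurd hz.1 (hS z hz.2)) ?_
  exact p.support_subset_of_adj_imp (H := delVerts G B)
    (fun _ _ ⟨hab, ha, _⟩ => mem_compOf_of_adj hab ha) hx

lemma IsPSDForcingSet.exists_neighborSet_inter_compOf_eq_singleton (hB : IsPSDForcingSet G B)
    (hw₀ : w₀ ∉ B) : ∃ u ∈ B, ∃ w, G.neighborSet u ∩ compOf G B w₀ = {w} := by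
  set C := compOf G B w₀
  obtain ⟨t, hCt, hCt'⟩ : ∃ t, ¬((psdStep G)^[t] B ∩ C).Nonempty ∧
      ((psdStep G)^[t + 1] B ∩ C).Nonempty := by
    refine Nat.exists_not_and_succ_of_not_zero_of_exists (fun ⟨z, hzB, hzC⟩ => hzC.1 hzB) ?_
    obtain ⟨s, hs⟩ := hB
    exact ⟨s, w₀, by simp [hs], hw₀, Reachable.refl _⟩
  replace hCt : ∀ z ∈ C, z ∉ (psdStep G)^[t] B := fun z hzC hzt => hCt ⟨z, hzt, hzC⟩
  obtain ⟨w, hwt, hwC⟩ := hCt'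
  rw [Function.iterate_succ_apply'] at hwt
  rcases hwt with hwt | ⟨u, hut, -, huw, huniq⟩
  · exact absurd hwt (hCt w hwC)
  have hu : u ∈ B := by_contra fun hu => hCt u (mem_compOf_of_adj huw hu hwC) hut
  refine ⟨u, hu, w, Subset.antisymm ?_ (singleton_subset_iff.mpr ⟨huw, hwC⟩)⟩
  rintro z ⟨huz, hzC⟩
  exact huniq z huz (hCt z hzC) (reachable_delVerts_of_compOf_disjoint hCt hwC hzC)

lemma mem_compOf_of_delVerts_adj_of_exchange
    (hN : G.neighborSet u ∩ compOf G B w₀ = {w}) (hT : insert w (B \ {u}) ⊆ T)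
    (hyx : (delVerts G T).Adj y x) (hx : x ∈ compOf G B w₀) : y ∈ compOf G B w₀ := by
  obtain ⟨hyx, hyT, hxT⟩ := hyx
  refine mem_compOf_of_adj hyx (fun hyB => ?_) hx
  obtain rfl : y = u := by_contra fun hyu => hyT (hT (Or.inr ⟨hyB, hyu⟩))
  exact hxT (hT (Or.inl (hN.subset ⟨hyx, hx⟩)))

lemma SimpleGraph.Walk.support_subset_compOf_of_exchange
    (hN : G.neighborSet u ∩ compOf G B w₀ = {w}) (hT : insert w (B \ {u}) ⊆ T)
    (p : (delVerts G T).Walk y x) (hx : x ∈ compOf G B w₀) :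
    ∀ z ∈ p.support, z ∈ compOf G B w₀ :=
  p.support_subset_of_adj_imp (fun _ _ h => mem_compOf_of_delVerts_adj_of_exchange hN hT h) hx

lemma PSDForce.of_exchange (hN : G.neighborSet u ∩ compOf G B w₀ = {w})
    (hT : insert w (B \ {u}) ⊆ T) (hST : S ∩ compOf G B w₀ ⊆ T) {v : V} (hv : v ∈ T)
    (hx : x ∉ T) (hxC : x ∈ compOf G B w₀) (h : PSDForce G S v x) : PSDForce G T v x := by
  obtain ⟨-, -, hvx, huniq⟩ := h
  refine ⟨hv, hx, hvx, fun y hvy hyT ⟨p⟩ => ?_⟩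
  have hp := p.support_subset_compOf_of_exchange hN hT hxC
  exact huniq y hvy (fun hyS => hyT (hST ⟨hyS, hp y p.start_mem_support⟩))
    (p.reachable_delVerts_of_support_subset hST hp)

lemma psdStep_iterate_inter_compOf_subset_exchange (hN : G.neighborSet u ∩ compOf G B w₀ = {w})
    (t : ℕ) : (psdStep G)^[t] B ∩ compOf G B w₀ ⊆ (psdStep G)^[t] (insert w (B \ {u})) := by
  induction t with
  | zero => exact fun x hx => absurd hx.1 hx.2.1
  | succ t ih =>
    rintro x ⟨hxt, hxC⟩
    rw [Function.iterate_succ_apply'] at hxt ⊢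
    by_cases hx' : x ∈ (psdStep G)^[t] (insert w (B \ {u}))
    · exact Or.inl hx'
    obtain hxt | ⟨v, hvx⟩ := hxt
    · exact absurd (ih ⟨hxt, hxC⟩) hx'
    have hB' := subset_psdStep_iterate (G := G) (insert w (B \ {u})) t
    have hv : v ∈ (psdStep G)^[t] (insert w (B \ {u})) := by
      by_cases hvB : v ∈ B
      · refine hB' (Or.inr ⟨hvB, fun hvu => hx' (hB' (Or.inl ?_))⟩)
        exact hN.subset ⟨hvu ▸ hvx.2.2.1, hxC⟩
      · exact ih ⟨hvx.1, mem_compOf_of_adj hvx.2.2.1 hvB hxC⟩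
    exact Or.inr ⟨v, hvx.of_exchange hN hB' ih hv hx' hxC⟩

lemma IsPSDForcingSet.exchange (hB : IsPSDForcingSet G B)
    (hN : G.neighborSet u ∩ compOf G B w₀ = {w}) :
    IsPSDForcingSet G (insert w (B \ {u})) := by
  obtain ⟨s, hs⟩ := hB
  obtain ⟨huw, hw⟩ := hN.symm.subset (mem_singleton w)
  have hCB' : compOf G B w₀ ∪ insert w (B \ {u}) ⊆ (psdStep G)^[s] (insert w (B \ {u})) :=
    union_subset
      (fun x hx => psdStep_iterate_inter_compOf_subset_exchange hN s ⟨by simp [hs], hx⟩)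
      (subset_psdStep_iterate _ s)
  refine IsPSDForcingSet.of_subset_psdStep_iterate ⟨s, hs⟩ (t := s + 1) fun b hb => ?_
  rw [Function.iterate_succ_apply']
  by_cases hbu : b = u
  · -- `w` forces `u`: every other neighbour of `w` is in `B \ {u}` or in the component
    subst b
    by_cases hus : u ∈ (psdStep G)^[s] (insert w (B \ {u}))
    · exact Or.inl hus
    refine Or.inr ⟨w, hCB' (Or.inr (mem_insert _ _)), hus, huw.symm,
      fun y hwy hys _ => by_contra fun hyu => hys (hCB' ?_)⟩
    by_cases hyB : y ∈ B
    · exact Or.inr (Or.inr ⟨hyB, hyu⟩)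
    · exact Or.inl (mem_compOf_of_adj hwy.symm hyB hw)
  · exact Or.inl (hCB' (Or.inr (Or.inr ⟨hb, hbu⟩)))

lemma compOf_exchange_subset_of_mem (hN : G.neighborSet u ∩ compOf G B w₀ = {w})
    (hx : x ∈ compOf G B w₀) : compOf G (insert w (B \ {u})) x ⊆ compOf G B w₀ \ {w} := by
  rintro y ⟨hy, ⟨p⟩⟩
  exact ⟨p.support_subset_compOf_of_exchange hN subset_rfl hx y p.start_mem_support,
    fun hyw => hy (Or.inl hyw)⟩

lemma compOf_exchange_subset_of_notMem (hN : G.neighborSet u ∩ compOf G B w₀ = {w})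
    (hx : x ∉ compOf G B w₀) :
    compOf G (insert w (B \ {u})) x ⊆ insert u (Bᶜ \ compOf G B w₀) := by
  rintro y ⟨hy, ⟨p⟩⟩
  have hyC : y ∉ compOf G B w₀ := fun hyC =>
    hx (p.reverse.support_subset_compOf_of_exchange hN subset_rfl hyC x p.reverse.start_mem_support)
  by_cases hyB : y ∈ B
  · exact Or.inl (by_contra fun hyu => hy (Or.inr ⟨hyB, hyu⟩))
  · exact Or.inr ⟨hyB, hyC⟩

lemma ncard_compOf_exchange_lt [Finite V] (hN : G.neighborSet u ∩ compOf G B w₀ = {w})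
    (hbig : Bᶜ.ncard + 1 < 2 * (compOf G B w₀).ncard) :
    (compOf G (insert w (B \ {u})) x).ncard < (compOf G B w₀).ncard := by
  by_cases hxC : x ∈ compOf G B w₀
  · calc _ ≤ (compOf G B w₀ \ {w}).ncard :=
          ncard_le_ncard (compOf_exchange_subset_of_mem hN hxC)
      _ < (compOf G B w₀).ncard :=
          ncard_sdiff_singleton_lt_of_mem (hN.symm.subset (mem_singleton w)).2
  · have hCB : compOf G B w₀ ⊆ Bᶜ := fun z hz => hz.1
    have hC_le := ncard_le_ncard hCB
    calc _ ≤ (insert u (Bᶜ \ compOf G B w₀)).ncard :=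
          ncard_le_ncard (compOf_exchange_subset_of_notMem hN hxC)
      _ ≤ (Bᶜ \ compOf G B w₀).ncard + 1 := ncard_insert_le _ _
      _ = Bᶜ.ncard - (compOf G B w₀).ncard + 1 := by rw [ncard_sdiff hCB]
      _ < (compOf G B w₀).ncard := by omega

lemma exists_ncard_compOf_eq_maxCompSize [Finite V] (h : 0 < maxCompSize G B) :
    ∃ w₀ ∉ B, (compOf G B w₀).ncard = maxCompSize G B := by
  have hne : ((fun w => (compOf G B w).ncard) '' Bᶜ).Nonempty := by
    by_contra hemp
    rw [not_nonempty_iff_eq_empty] at hemp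
    simp [maxCompSize, hemp] at h
  exact Nat.sSup_mem hne (toFinite _).bddAbove

lemma maxCompSize_lt [Finite V] {m : ℕ} (hm : 0 < m) (h : ∀ x ∉ B, (compOf G B x).ncard < m) :
    maxCompSize G B < m := by
  rcases Nat.eq_zero_or_pos (maxCompSize G B) with h0 | h0
  · omega
  obtain ⟨x, hx, hxm⟩ := exists_ncard_compOf_eq_maxCompSize h0
  exact hxm ▸ h x hx

end Exchange

/-- if the largest component of `G - B` has more than `⌈(n-k)/2⌉` vertices,
there is a PSD forcing set `B'` of the same size `k` whose largest component of `G - B'`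
is strictly smaller. -/
theorem stmt4 [Fintype V] (G : SimpleGraph V) (B : Set V) (k : ℕ)
    (hB : IsPSDForcingSet G B) (hk : B.ncard = k)
    (hbig : (Fintype.card V - k + 1) / 2 < maxCompSize G B) :
    ∃ B' : Set V, IsPSDForcingSet G B' ∧ B'.ncard = k ∧
      maxCompSize G B' < maxCompSize G B := by
  obtain ⟨w₀, hw₀, hC⟩ := exists_ncard_compOf_eq_maxCompSize (G := G) (B := B) (by omega)
  obtain ⟨u, hu, w, hN⟩ := hB.exists_neighborSet_inter_compOf_eq_singleton hw₀
  have hw : w ∈ compOf G B w₀ := (hN.symm.subset (mem_singleton w)).2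
  have hcompl : Bᶜ.ncard + k = Fintype.card V := by
    rw [← hk, add_comm, ncard_add_ncard_compl, Nat.card_eq_fintype_card]
  have hbig' : Bᶜ.ncard + 1 < 2 * (compOf G B w₀).ncard := by omega
  refine ⟨_, hB.exchange hN, by rw [ncard_exchange hw.1 hu, hk], ?_⟩
  rw [← hC]
  exact maxCompSize_lt (by omega) fun _ _ => ncard_compOf_exchange_lt hN hbig'
end

section
/- Let k be a natural number. For any graph G with |V(G)| ≥ 2k + 1, pt_+(G) < |V(G)| − k. Consequently, for each fixed k there are only finitely many graphs (up to isomorphism) with pt_+(G) ≥ |V(G)| − k. -/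
open SimpleGraph Set

variable {V : Type*}

/-!
Every PSD forcing set `B` can be rebalanced, keeping its size, until every component of `G - B`
has at most `⌊n/2⌋` vertices: if a component `X` is larger, let `u → w` be a first-round force
into `X` and swap `u` for `w`. Then `w` forces `u` back in one round, so the new set is still
forcing, and each new component lies either in `X \ {w}` or in `{u} ∪ V \ (B ∪ X)`, both
smaller than `X`. In every round each white component of `G - Bₜ` receives at least one force,
so the propagation time of such a set is at most the size of its largest component.
Hence `pt₊(G) ≤ ⌊n/2⌋ < n - k` once `n ≥ 2k + 1`, and only the finitely many graphs on at
most `2k` vertices can have `pt₊(G) ≥ n - k`.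
-/

section PSDForcing

variable {G : SimpleGraph V}

lemma delVerts_anti_s11 {A B : Set V} (h : A ⊆ B) : delVerts G B ≤ delVerts G A :=
  fun _ _ hab => ⟨hab.1, fun ha => hab.2.1 (h ha), fun hb => hab.2.2 (h hb)⟩

lemma mem_compOf_self {A : Set V} {v : V} (hv : v ∉ A) : v ∈ compOf G A v :=
  ⟨hv, Reachable.refl v⟩

lemma compOf_mem_of_adj {A : Set V} {v z z' : V} (hz : z ∈ compOf G A v)
    (h : (delVerts G A).Adj z z') : z' ∈ compOf G A v :=
  ⟨h.2.2, h.symm.reachable.trans hz.2⟩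

lemma compOf_eq_of_mem {A : Set V} {v w : V} (h : w ∈ compOf G A v) :
    compOf G A w = compOf G A v := by
  ext x
  exact ⟨fun hx => ⟨hx.1, hx.2.trans h.2⟩, fun hx => ⟨hx.1, hx.2.trans h.2.symm⟩⟩

lemma compOf_anti {A B : Set V} (h : A ⊆ B) (v : V) : compOf G B v ⊆ compOf G A v :=
  fun _ hx => ⟨fun hA => hx.1 (h hA), hx.2.mono (delVerts_anti_s11 h)⟩

lemma compOf_subset_of_adj_closed {A P : Set V} {v : V} (hv : v ∈ P)
    (hP : ∀ ⦃z z'⦄, z ∈ P → (delVerts G A).Adj z z' → z' ∈ P) : compOf G A v ⊆ P := by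
  rintro x ⟨-, ⟨p⟩⟩
  suffices ∀ {a b : V}, (delVerts G A).Walk a b → b ∈ P → a ∈ P from this p hv
  intro a b q
  induction q with
  | nil => exact id
  | cons h _ ih => exact fun hb => hP (ih hb) h.symm

lemma disjoint_compOf_of_adj_closed {A P : Set V} {v : V} (hvA : v ∉ A) (hvP : v ∉ P)
    (hP : ∀ ⦃z z'⦄, z ∈ P → (delVerts G A).Adj z z' → z' ∈ P) : Disjoint (compOf G A v) P := by
  refine Set.disjoint_left.mpr fun x hx hxP => hvP ?_
  exact compOf_subset_of_adj_closed hxP hP ((compOf_eq_of_mem hx).symm ▸ mem_compOf_self hvA)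

lemma reachable_delVerts_of_disjoint {A A' : Set V} {v x y : V}
    (hA' : Disjoint (compOf G A v) A') (hx : x ∈ compOf G A v)
    (hxy : (delVerts G A).Reachable x y) : (delVerts G A').Reachable x y := by
  obtain ⟨p⟩ := hxy
  induction p with
  | nil => exact Reachable.refl _
  | cons h _ ih =>
    have hx' := compOf_mem_of_adj hx h
    exact (show (delVerts G A').Adj _ _ from
      ⟨h.1, hA'.notMem_of_mem_left hx, hA'.notMem_of_mem_left hx'⟩).reachable.trans (ih hx')

lemma subset_psdStep (B : Set V) : B ⊆ psdStep G B :=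
  Set.subset_union_left

lemma subset_iterate_psdStep (B : Set V) (t : ℕ) : B ⊆ (psdStep G)^[t] B := by
  induction t with
  | zero => exact subset_rfl
  | succ t ih => exact ih.trans (Function.iterate_succ_apply' (psdStep G) t B ▸ subset_psdStep _)

lemma iterate_psdStep_subset_succ (B : Set V) (t : ℕ) :
    (psdStep G)^[t] B ⊆ (psdStep G)^[t + 1] B :=
  Function.iterate_succ_apply' (psdStep G) t B ▸ subset_psdStep _

lemma psdStep_mono_s11 {A B : Set V} (h : A ⊆ B) : psdStep G A ⊆ psdStep G B := by
  rintro y (hy | ⟨u, hu, -, hadj, huniq⟩)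
  · exact subset_psdStep B (h hy)
  · by_cases hyB : y ∈ B
    · exact subset_psdStep B hyB
    · exact Or.inr ⟨u, h hu, hyB, hadj,
        fun x hx hxB hr => huniq x hx (fun hxA => hxB (h hxA)) (hr.mono (delVerts_anti_s11 h))⟩

lemma iterate_psdStep_mono {A B : Set V} (h : A ⊆ B) (t : ℕ) :
    (psdStep G)^[t] A ⊆ (psdStep G)^[t] B :=
  Monotone.iterate (fun _ _ => psdStep_mono_s11) t h

lemma psdStep_univ : psdStep G univ = univ :=
  (subset_psdStep _).antisymm' (Set.subset_univ _)

lemma isPSDForcingSet_univ : IsPSDForcingSet G univ :=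
  ⟨0, rfl⟩

lemma IsPSDForcingSet.mono {A B : Set V} (hA : IsPSDForcingSet G A) (h : A ⊆ B) :
    IsPSDForcingSet G B := by
  obtain ⟨t, ht⟩ := hA
  exact ⟨t, Set.eq_univ_of_univ_subset (ht ▸ iterate_psdStep_mono h t)⟩

lemma IsPSDForcingSet.of_psdStep {B : Set V} (h : IsPSDForcingSet G (psdStep G B)) :
    IsPSDForcingSet G B := by
  obtain ⟨t, ht⟩ := h
  exact ⟨t + 1, by rwa [Function.iterate_succ_apply]⟩

lemma IsPSDForcingSet.iterate {B : Set V} (h : IsPSDForcingSet G B) (t : ℕ) :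
    IsPSDForcingSet G ((psdStep G)^[t] B) := by
  obtain ⟨T, hT⟩ := h
  refine ⟨T, ?_⟩
  rw [← Function.iterate_add_apply, add_comm, Function.iterate_add_apply, hT]
  exact Function.iterate_fixed psdStep_univ t

/-- A blue vertex that could not force into the component is blocked by a second white neighbor
in it, which stays white and connected to the component in `G - A'`. -/
lemma disjoint_psdStep_of_stalled {A A' : Set V} {v : V}
    (hA' : Disjoint (compOf G A v) A') (hstall : Disjoint (compOf G A v) (psdStep G A)) :
    Disjoint (compOf G A v) (psdStep G A') := by
  refine Set.disjoint_left.mpr fun y hy => ?_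
  rintro (hyA' | ⟨u, hu, -, hadj, huniq⟩)
  · exact hA'.notMem_of_mem_left hy hyA'
  by_cases huA : u ∈ A
  · have hnf : ¬ PSDForce G A u y := fun hf => hstall.notMem_of_mem_left hy (Or.inr ⟨u, hf⟩)
    simp only [PSDForce, huA, hy.1, not_false_eq_true, hadj, true_and, not_forall] at hnf
    obtain ⟨x, hux, hxA, hxy, hne⟩ := hnf
    have hx : x ∈ compOf G A v := ⟨hxA, hxy.trans hy.2⟩
    exact hne (huniq x hux (hA'.notMem_of_mem_left hx) (reachable_delVerts_of_disjoint hA' hx hxy))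
  · exact hA'.notMem_of_mem_left (compOf_mem_of_adj hy ⟨hadj.symm, hy.1, huA⟩) hu

lemma disjoint_iterate_psdStep_of_stalled {A : Set V} {v : V}
    (hstall : Disjoint (compOf G A v) (psdStep G A)) (d : ℕ) :
    Disjoint (compOf G A v) ((psdStep G)^[d] A) := by
  induction d with
  | zero => exact Set.disjoint_left.mpr fun _ hx => hx.1
  | succ d ih =>
    rw [Function.iterate_succ_apply']
    exact disjoint_psdStep_of_stalled ih hstall

lemma IsPSDForcingSet.compOf_inter_psdStep_nonempty {A : Set V} (hA : IsPSDForcingSet G A)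
    {v : V} (hv : v ∉ A) : (compOf G A v ∩ psdStep G A).Nonempty := by
  rw [Set.nonempty_iff_ne_empty, Ne, ← Set.disjoint_iff_inter_eq_empty]
  intro hstall
  obtain ⟨T, hT⟩ := hA
  exact (disjoint_iterate_psdStep_of_stalled hstall T).notMem_of_mem_left
    (mem_compOf_self hv) (hT ▸ Set.mem_univ v)

lemma IsPSDForcingSet.ncard_compOf_diff_iterate_le [Finite V] {B : Set V}
    (hB : IsPSDForcingSet G B) (v : V) (t : ℕ) :
    (compOf G B v \ (psdStep G)^[t] B).ncard ≤ (compOf G B v).ncard - t := by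
  induction t with
  | zero => exact (Set.ncard_le_ncard Set.sdiff_subset).trans_eq (Nat.sub_zero _).symm
  | succ t ih =>
    rcases (compOf G B v \ (psdStep G)^[t] B).eq_empty_or_nonempty with hempty | ⟨x, hxC, hxt⟩
    · have : compOf G B v \ (psdStep G)^[t + 1] B = ∅ :=
        Set.eq_empty_of_subset_empty
          (hempty ▸ Set.sdiff_subset_sdiff_right (iterate_psdStep_subset_succ B t))
      rw [this, Set.ncard_empty]
      exact Nat.zero_le _
    obtain ⟨y, hyx, hy⟩ := (hB.iterate t).compOf_inter_psdStep_nonempty hxt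
    have hyC : y ∈ compOf G B v \ (psdStep G)^[t] B :=
      ⟨compOf_eq_of_mem hxC ▸ compOf_anti (subset_iterate_psdStep B t) x hyx, hyx.1⟩
    have hsub : compOf G B v \ (psdStep G)^[t + 1] B ⊆
        (compOf G B v \ (psdStep G)^[t] B) \ {y} := by
      rintro z ⟨hzC, hzt⟩
      refine ⟨⟨hzC, fun h => hzt (iterate_psdStep_subset_succ B t h)⟩, ?_⟩
      rintro rfl
      exact hzt (by rwa [Function.iterate_succ_apply'])
    calc _ ≤ ((compOf G B v \ (psdStep G)^[t] B) \ {y}).ncard := Set.ncard_le_ncard hsub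
      _ = (compOf G B v \ (psdStep G)^[t] B).ncard - 1 := Set.ncard_sdiff_singleton_of_mem hyC
      _ ≤ _ := by omega

lemma IsPSDForcingSet.psdPropTime_le [Finite V] {B : Set V} (hB : IsPSDForcingSet G B) {m : ℕ}
    (hcomp : ∀ v ∉ B, (compOf G B v).ncard ≤ m) : psdPropTime G B ≤ m := by
  refine Nat.sInf_le (Set.eq_univ_of_forall fun v => ?_)
  by_contra hv
  have hvB : v ∉ B := fun h => hv (subset_iterate_psdStep B m h)
  have hpos : 0 < (compOf G B v \ (psdStep G)^[m] B).ncard :=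
    (Set.ncard_pos).mpr ⟨v, mem_compOf_self hvB, hv⟩
  have := hB.ncard_compOf_diff_iterate_le v m
  have := hcomp v hvB
  omega

namespace PSDForce

variable {B : Set V} {u w : V}

/-- `u` has no neighbor in `compOf G B w \ {w}`, as `w` is its only neighbor in
`compOf G B w`. -/
lemma mem_compOf_sdiff_of_adj_swap (h : PSDForce G B u w) ⦃z z' : V⦄
    (hz : z ∈ compOf G B w \ {w}) (hzz' : (delVerts G (insert w (B \ {u}))).Adj z z') :
    z' ∈ compOf G B w \ {w} := by
  obtain ⟨⟨hzB, hzr⟩, hzw⟩ := hz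
  obtain ⟨hadj, -, hz'⟩ := hzz'
  have hz'w : z' ≠ w := fun he => hz' (he ▸ Set.mem_insert _ _)
  have hz'u : z' ≠ u := by
    rintro rfl
    exact hzw (h.2.2.2 z hadj.symm hzB hzr)
  have hz'B : z' ∉ B := fun hB => hz' (Set.mem_insert_of_mem _ ⟨hB, hz'u⟩)
  exact ⟨compOf_mem_of_adj ⟨hzB, hzr⟩ ⟨hadj, hzB, hz'B⟩, hz'w⟩

lemma swap_s11 (h : PSDForce G B u w) : PSDForce G (insert w (B \ {u})) w u := by
  have ⟨hu, hw, hadj, _⟩ := h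
  have huB' : u ∉ insert w (B \ {u}) := by
    rintro (he | ⟨-, hne⟩)
    exacts [hadj.ne he, hne rfl]
  refine ⟨Set.mem_insert _ _, huB', hadj.symm, fun x hwx hxB' hxu => ?_⟩
  by_contra hne
  have hxB : x ∉ B := fun hB => hxB' (Set.mem_insert_of_mem _ ⟨hB, hne⟩)
  have hxX : x ∈ compOf G B w \ {w} :=
    ⟨⟨hxB, (show (delVerts G B).Adj x w from ⟨hwx.symm, hxB, hw⟩).reachable⟩,
      fun he => hxB' (he ▸ Set.mem_insert _ _)⟩
  have huX := compOf_subset_of_adj_closed hxX h.mem_compOf_sdiff_of_adj_swap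
    ⟨huB', hxu.symm⟩
  exact huX.1.1 hu

lemma isPSDForcingSet_swap (h : PSDForce G B u w) (hB : IsPSDForcingSet G B) :
    IsPSDForcingSet G (insert w (B \ {u})) := by
  refine (hB.mono fun x hx => ?_).of_psdStep
  by_cases hxu : x = u
  · exact Or.inr ⟨w, hxu ▸ h.swap_s11⟩
  · exact subset_psdStep _ (Set.mem_insert_of_mem _ ⟨hx, hxu⟩)

lemma ncard_compOf_swap_le [Finite V] (h : PSDForce G B u w) {m : ℕ}
    (hX : (compOf G B w).ncard ≤ m + 1) (hcard : Nat.card V ≤ m + (compOf G B w).ncard)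
    {z : V} (hz : z ∉ insert w (B \ {u})) : (compOf G (insert w (B \ {u})) z).ncard ≤ m := by
  by_cases hzX : z ∈ compOf G B w \ {w}
  · calc _ ≤ (compOf G B w \ {w}).ncard :=
          Set.ncard_le_ncard (compOf_subset_of_adj_closed hzX h.mem_compOf_sdiff_of_adj_swap)
      _ = (compOf G B w).ncard - 1 := Set.ncard_sdiff_singleton_of_mem (mem_compOf_self h.2.1)
      _ ≤ m := by omega
  · have hsub : compOf G (insert w (B \ {u})) z ⊆ insert u (B ∪ compOf G B w)ᶜ := by
      intro x hx
      have hxX := (disjoint_compOf_of_adj_closed hz hzX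
        h.mem_compOf_sdiff_of_adj_swap).notMem_of_mem_left hx
      by_cases hxu : x = u
      · exact hxu ▸ Set.mem_insert _ _
      have hxB : x ∉ B := fun hB => hx.1 (Set.mem_insert_of_mem _ ⟨hB, hxu⟩)
      have hxw : x ≠ w := fun he => hx.1 (he ▸ Set.mem_insert _ _)
      exact Set.mem_insert_of_mem _ fun hx' => hx'.elim hxB fun hxX' => hxX ⟨hxX', hxw⟩
    have hBX : (B ∪ compOf G B w).ncard = B.ncard + (compOf G B w).ncard :=
      Set.ncard_union_eq (Set.disjoint_left.mpr fun _ hB hX => hX.1 hB)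
    have hBpos : 0 < B.ncard := (Set.ncard_pos).mpr ⟨u, h.1⟩
    have hle := Set.ncard_le_card (B ∪ compOf G B w)
    calc _ ≤ (insert u (B ∪ compOf G B w)ᶜ).ncard := Set.ncard_le_ncard hsub
      _ ≤ (B ∪ compOf G B w)ᶜ.ncard + 1 := Set.ncard_insert_le _ _
      _ = Nat.card V - (B ∪ compOf G B w).ncard + 1 := by rw [Set.ncard_compl]
      _ ≤ m := by omega

end PSDForce

end PSDForcing

section Rebalancing

variable {G : SimpleGraph V} [Finite V]

lemma IsPSDForcingSet.exists_swap_ncard_compOf_le {B : Set V} (hB : IsPSDForcingSet G B)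
    {m : ℕ} (hm : Nat.card V ≤ 2 * m + 1) (hcomp : ∀ v ∉ B, (compOf G B v).ncard ≤ m + 1) :
    ∃ B' : Set V, IsPSDForcingSet G B' ∧ B'.ncard = B.ncard ∧
      ∀ v ∉ B', (compOf G B' v).ncard ≤ m := by
  by_cases hsmall : ∀ v ∉ B, (compOf G B v).ncard ≤ m
  · exact ⟨B, hB, rfl, hsmall⟩
  push Not at hsmall
  obtain ⟨v, hvB, hlarge⟩ := hsmall
  obtain ⟨w, hwX, hwB | ⟨u, hforce⟩⟩ := hB.compOf_inter_psdStep_nonempty hvB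
  · exact absurd hwB hwX.1
  have hX : compOf G B w = compOf G B v := compOf_eq_of_mem hwX
  exact ⟨_, hforce.isPSDForcingSet_swap hB, Set.ncard_exchange hwX.1 hforce.1,
    fun z hz => hforce.ncard_compOf_swap_le (hX ▸ hcomp v hvB) (by rw [hX]; omega) hz⟩

lemma IsPSDForcingSet.exists_ncard_compOf_le_half {B : Set V} (hB : IsPSDForcingSet G B) :
    ∃ B' : Set V, IsPSDForcingSet G B' ∧ B'.ncard = B.ncard ∧
      ∀ v ∉ B', (compOf G B' v).ncard ≤ Nat.card V / 2 := by
  suffices ∀ m (B : Set V), IsPSDForcingSet G B → (∀ v ∉ B, (compOf G B v).ncard ≤ m) →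
      ∃ B' : Set V, IsPSDForcingSet G B' ∧ B'.ncard = B.ncard ∧
        ∀ v ∉ B', (compOf G B' v).ncard ≤ Nat.card V / 2 from
    this _ B hB fun v _ => Set.ncard_le_card _
  intro m
  induction m with
  | zero => exact fun B hB hcomp => ⟨B, hB, rfl, fun v hv => (hcomp v hv).trans (Nat.zero_le _)⟩
  | succ m ih =>
    intro B hB hcomp
    by_cases hm : m + 1 ≤ Nat.card V / 2
    · exact ⟨B, hB, rfl, fun v hv => (hcomp v hv).trans hm⟩
    obtain ⟨B', hB', hcard', hcomp'⟩ := hB.exists_swap_ncard_compOf_le (by omega) hcomp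
    obtain ⟨B'', hB'', hcard'', hcomp''⟩ := ih B' hB' hcomp'
    exact ⟨B'', hB'', hcard''.trans hcard', hcomp''⟩

end Rebalancing

theorem psdPtG_le_half [Finite V] (G : SimpleGraph V) : psdPtG G ≤ Nat.card V / 2 := by
  have hZ : {k | ∃ B : Set V, IsPSDForcingSet G B ∧ B.ncard = k}.Nonempty :=
    ⟨_, univ, isPSDForcingSet_univ, rfl⟩
  obtain ⟨B₀, hB₀, hcard₀⟩ := Nat.sInf_mem hZ
  obtain ⟨B, hB, hcard, hcomp⟩ := hB₀.exists_ncard_compOf_le_half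
  calc psdPtG G ≤ psdPropTime G B := Nat.sInf_le ⟨B, hB, hcard.trans hcard₀, rfl⟩
    _ ≤ Nat.card V / 2 := hB.psdPropTime_le hcomp

lemma finite_setOf_fst_le {β : ℕ → Type*} [∀ n, Finite (β n)] (N : ℕ) :
    {p : (n : ℕ) × β n | p.1 ≤ N}.Finite := by
  refine (Set.finite_range fun q : (n : Fin (N + 1)) × β n =>
    (⟨q.1, q.2⟩ : (n : ℕ) × β n)).subset ?_
  rintro ⟨n, b⟩ hn
  exact ⟨⟨⟨n, Nat.lt_succ_of_le hn⟩, b⟩, rfl⟩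

/-- for every graph `G` with `|V(G)| ≥ 2k + 1` we have
`pt_+(G) < |V(G)| - k`; consequently only finitely many graphs satisfy
`pt_+(G) ≥ |V(G)| - k`. -/
theorem stmt11 (k : ℕ) :
    (∀ (V : Type) [Fintype V] (G : SimpleGraph V),
      2 * k + 1 ≤ Fintype.card V → psdPtG G < Fintype.card V - k) ∧
    {p : (n : ℕ) × SimpleGraph (Fin n) | p.1 - k ≤ psdPtG p.2}.Finite := by
  have hlt : ∀ (V : Type) [Fintype V] (G : SimpleGraph V),
      2 * k + 1 ≤ Fintype.card V → psdPtG G < Fintype.card V - k := by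
    intro V _ G hV
    have := psdPtG_le_half G
    rw [Nat.card_eq_fintype_card] at this
    omega
  refine ⟨hlt, (finite_setOf_fst_le (2 * k)).subset fun p hp => ?_⟩
  by_contra hbig
  have := hlt (Fin p.1) p.2 (by rw [Fintype.card_fin]; exact Nat.lt_of_not_le hbig)
  rw [Fintype.card_fin] at this
  exact absurd hp (Nat.not_le_of_lt this)
end
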